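/- arXiv:1801.10133 — 6 statements merged into one kernel-verified Lean document; each statement's English description precedes it below -/
import Mathlib

section
/- Let X and Y be Hausdorff topological spaces, and let φ be a map from the set of open subsets of X to the set of open subsets of Y which preserves arbitrary unions and finite intersections, satisfies φ(∅) = ∅ and φ(X) = Y. Then there exists a unique continuous map q : Y → X such that φ(U) = q⁻¹(U) for every open subset U ⊆ X. -/
/-- Stone duality for Hausdorff spaces: a map on open sets preserving arbitrary unions,
finite intersections, empty set and whole space is the preimage map of a unique
continuous map. -/
theorem stone_duality_hausdorff {X Y : Type*} [TopologicalSpace X] [TopologicalSpace Y]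
    [T2Space X] [T2Space Y] (φ : Set X → Set Y)
    (hopen : ∀ U : Set X, IsOpen U → IsOpen (φ U))
    (hUnion : ∀ S : Set (Set X), (∀ U ∈ S, IsOpen U) → φ (⋃₀ S) = ⋃ U ∈ S, φ U)
    (hInter : ∀ U V : Set X, IsOpen U → IsOpen V → φ (U ∩ V) = φ U ∩ φ V)
    (hempty : φ ∅ = ∅) (huniv : φ Set.univ = Set.univ) :
    ∃! q : Y → X, Continuous q ∧ ∀ U : Set X, IsOpen U → φ U = q ⁻¹' U := by
  -- for each y there is a unique x all of whose open neighborhoods U satisfy y ∈ φ U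
  have key : ∀ y : Y, ∃ x : X, (∀ U, IsOpen U → x ∈ U → y ∈ φ U) ∧
      ∀ z : X, (∀ U, IsOpen U → z ∈ U → y ∈ φ U) → z = x := by
    intro y
    -- existence
    have hex : ∃ x : X, ∀ U, IsOpen U → x ∈ U → y ∈ φ U := by
      by_contra h
      push_neg at h
      set S : Set (Set X) := {U | IsOpen U ∧ y ∉ φ U} with hS
      have hSopen : ∀ U ∈ S, IsOpen U := fun U hU => hU.1
      have hcover : ⋃₀ S = Set.univ := by
        apply Set.eq_univ_of_forall
        intro x
        obtain ⟨U, hUo, hxU, hyU⟩ := h x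
        exact ⟨U, ⟨hUo, hyU⟩, hxU⟩
      have := hUnion S hSopen
      rw [hcover, huniv] at this
      have hy : (y : Y) ∈ (Set.univ : Set Y) := trivial
      rw [this] at hy
      obtain ⟨U, hU, hyU⟩ := Set.mem_iUnion₂.mp hy
      exact hU.2 hyU
    obtain ⟨x, hx⟩ := hex
    refine ⟨x, hx, fun z hz => ?_⟩
    by_contra hne
    obtain ⟨U, V, hUo, hVo, hzU, hxV, hdisj⟩ := t2_separation hne
    have h1 : y ∈ φ U := hz U hUo hzU
    have h2 : y ∈ φ V := hx V hVo hxV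
    have : y ∈ φ (U ∩ V) := by rw [hInter U V hUo hVo]; exact ⟨h1, h2⟩
    rw [hdisj.inter_eq, hempty] at this
    exact this
  choose q hq huq using key
  have hmain : ∀ U : Set X, IsOpen U → φ U = q ⁻¹' U := by
    intro U hUo
    ext y
    constructor
    · intro hy
      -- show q y ∈ U
      set S : Set (Set X) := {V | IsOpen V ∧ y ∉ φ V} with hS
      have hSopen : ∀ V ∈ S, IsOpen V := fun V hV => hV.1
      have hnot : ¬ U ⊆ ⋃₀ S := by
        intro hsub
        -- monotonicity: φ U ⊆ φ (⋃₀ S)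
        have hWo : ∀ V ∈ insert U S, IsOpen V := by
          rintro V (rfl | hV)
          · exact hUo
          · exact hV.1
        have hunion : ⋃₀ insert U S = ⋃₀ S := by
          rw [Set.sUnion_insert]
          exact Set.union_eq_right.mpr hsub
        have h1 := hUnion (insert U S) hWo
        rw [hunion, hUnion S hSopen] at h1
        have hyin : y ∈ ⋃ V ∈ S, φ V := by
          rw [h1]; exact Set.mem_biUnion (Set.mem_insert U S) hy
        obtain ⟨V, hV, hyV⟩ := Set.mem_iUnion₂.mp hyin
        exact hV.2 hyV
      obtain ⟨x, hxU, hxW⟩ := Set.not_subset.mp hnot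
      have hxprop : ∀ V, IsOpen V → x ∈ V → y ∈ φ V := by
        intro V hVo hxV
        by_contra hyV
        exact hxW ⟨V, ⟨hVo, hyV⟩, hxV⟩
      have hxq := huq y x hxprop
      show q y ∈ U
      rw [← hxq]
      exact hxU
    · intro hy
      exact hq y U hUo hy
  have hcont : Continuous q := by
    rw [continuous_def]
    intro U hUo
    rw [← hmain U hUo]
    exact hopen U hUo
  refine ⟨q, ⟨hcont, hmain⟩, ?_⟩
  rintro q' ⟨hc', hp'⟩
  funext y
  apply huq y
  intro U hUo hmem
  rw [hp' U hUo]
  exact hmem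
end

section
/- For every d ≥ 1, the alternating group Alt(3d) on {1, …, 3d} is generated by Alt({d+1, …, 3d}) together with the union over i = 1, …, d of Alt({i, d+i, 2d+i}). -/
/-- The set of even permutations of `Fin n` supported in a subset `S`. -/
def altSupported (n : ℕ) (S : Set (Fin n)) : Set (Equiv.Perm (Fin n)) :=
  {σ | σ ∈ alternatingGroup (Fin n) ∧ ∀ x, x ∉ S → σ x = x}

/-
Every 3-cycle σ lies in the closure: induct on the number of low points (those `< d`) in the
support of σ. Without low points σ lies in `Alt({d, …, 3d-1})`; if its support lies in a triple
`{i, d+i, 2d+i}` it lies in the Alt of that triple. Otherwise, for a low point `i` of the support,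
one of the two 3-cycles of that triple sends `i` to a high point, sends no high point of the
support to a low one, and so conjugates σ to a 3-cycle with fewer low points.
-/

open Equiv Equiv.Perm Finset

theorem Subgroup.mem_of_conj_mem {G : Type*} [Group G] {H : Subgroup G} {g x : G} (hg : g ∈ H)
    (h : g * x * g⁻¹ ∈ H) : x ∈ H := by
  simpa [mul_assoc] using H.mul_mem (H.mul_mem (H.inv_mem hg) h) hg

theorem Finset.card_filter_map_lt {α : Type*} {s : Finset α} {p : α → Prop} [DecidablePred p]
    {f : α ↪ α} {a : α} (ha : a ∈ s) (hpa : p a) (hfa : ¬ p (f a))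
    (hf : ∀ x ∈ s, p (f x) → p x) : #((s.map f).filter p) < #(s.filter p) := by
  rw [filter_map, card_map]
  refine card_lt_card
    ⟨fun x hx => ?_, fun h => hfa (mem_filter.1 (h (mem_filter.2 ⟨ha, hpa⟩))).2⟩
  rw [mem_filter] at hx ⊢
  exact ⟨hx.1, hf x hx.1 hx.2⟩

namespace Equiv.Perm

variable {α : Type*} [Fintype α] [DecidableEq α]

theorem IsThreeCycle.conj {σ : Perm α} (hσ : σ.IsThreeCycle) (g : Perm α) :
    (g * σ * g⁻¹).IsThreeCycle := by
  rw [← card_support_eq_three_iff, support_conj, card_map, hσ.card_support]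

theorem support_swap_mul_swap_subset (a b c : α) :
    (swap a c * swap a b).support ⊆ {a, b, c} := by
  intro x hx
  by_contra h
  simp only [mem_insert, mem_singleton, not_or] at h
  simp [swap_apply_of_ne_of_ne, h.1, h.2.1, h.2.2] at hx

variable {p : α → Prop} [DecidablePred p]

theorem card_filter_support_conj_swap_mul_swap_lt {σ : Perm α} {a b c : α}
    (ha : a ∈ σ.support) (hpa : p a) (hpb : ¬ p b) (hpc : ¬ p c) (hbc : b ≠ c)
    (hc : c ∉ σ.support) :
    #(((swap a c * swap a b) * σ * (swap a c * swap a b)⁻¹).support.filter p) <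
      #(σ.support.filter p) := by
  have hab : a ≠ b := fun h => hpb (h ▸ hpa)
  have hac : a ≠ c := fun h => hpc (h ▸ hpa)
  rw [support_conj]
  refine card_filter_map_lt ha hpa (by simpa [swap_apply_of_ne_of_ne hab.symm hbc] using hpb) ?_
  intro x hx hpx
  by_cases hxa : x = a
  · exact hxa ▸ hpa
  by_cases hxb : x = b
  · simp [hxb, hpc] at hpx
  have hxc : x ≠ c := fun h => hc (h ▸ hx)
  simpa [swap_apply_of_ne_of_ne hxa hxb, swap_apply_of_ne_of_ne hxa hxc] using hpx

theorem alternatingGroup_le_of_isThreeCycle_mem_high_and_triples {H : Subgroup (Perm α)}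
    (hhigh : ∀ σ : Perm α, σ.IsThreeCycle → (∀ x ∈ σ.support, ¬ p x) → σ ∈ H)
    (htriple : ∀ a, p a → ∃ b c, ¬ p b ∧ ¬ p c ∧ b ≠ c ∧
      ∀ σ : Perm α, σ.IsThreeCycle → σ.support ⊆ {a, b, c} → σ ∈ H) :
    alternatingGroup α ≤ H := by
  rw [← closure_three_cycles_eq_alternating, Subgroup.closure_le]
  intro σ (hσ : σ.IsThreeCycle)
  induction hn : #(σ.support.filter p) using Nat.strong_induction_on generalizing σ with
  | _ n ih =>
  by_cases hlow : ∀ x ∈ σ.support, ¬ p x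
  · exact hhigh σ hσ hlow
  push Not at hlow
  obtain ⟨a, ha, hpa⟩ := hlow
  obtain ⟨b, c, hpb, hpc, hbc, hH⟩ := htriple a hpa
  by_cases hsub : σ.support ⊆ {a, b, c}
  · exact hH σ hσ hsub
  have hab : a ≠ b := fun h => hpb (h ▸ hpa)
  have hac : a ≠ c := fun h => hpc (h ▸ hpa)
  have hbc_out : b ∉ σ.support ∨ c ∉ σ.support := by
    by_contra! hbc_in
    refine hsub (eq_of_subset_of_card_le ?_ ?_).ge
    · simp [insert_subset_iff, ha, hbc_in.1, hbc_in.2]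
    · rw [hσ.card_support, card_insert_of_notMem (by simp [hab, hac]),
        card_pair hbc]
  wlog hc : c ∉ σ.support generalizing b c
  · exact this c b hpc hpb hbc.symm (by simpa only [pair_comm] using hH)
      (by simpa only [pair_comm] using hsub) hac hab hbc_out.symm (hbc_out.resolve_right hc)
  have hg : swap a c * swap a b ∈ H := hH _
    (isThreeCycle_swap_mul_swap_same hac hab hbc.symm) (support_swap_mul_swap_subset a b c)
  exact Subgroup.mem_of_conj_mem hg (ih _ (hn ▸ card_filter_support_conj_swap_mul_swap_lt
    ha hpa hpb hpc hbc hc) (hσ.conj _) rfl)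

end Equiv.Perm

theorem mem_altSupported_of_isThreeCycle {n : ℕ} {S : Set (Fin n)} {σ : Perm (Fin n)}
    (hσ : σ.IsThreeCycle) (hS : ↑σ.support ⊆ S) : σ ∈ altSupported n S :=
  ⟨hσ.mem_alternatingGroup, fun _ hx => notMem_support.1 fun h => hx (hS h)⟩

/-- `Alt(3d)` is generated by `Alt({d, …, 3d-1})` together with the groups
`Alt({i, d+i, 2d+i})` for `i = 0, …, d-1` (relabelling `{1, …, 3d}` as `{0, …, 3d-1}`). -/
theorem alternating_generated_by_pieces (d : ℕ) :
    Subgroup.closure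
        (altSupported (3 * d) {x | d ≤ (x : ℕ)} ∪
          ⋃ i : Fin d,
            altSupported (3 * d)
              {⟨i.1, by have := i.2; omega⟩, ⟨d + i.1, by have := i.2; omega⟩,
                ⟨2 * d + i.1, by have := i.2; omega⟩}) =
      alternatingGroup (Fin (3 * d)) := by
  refine le_antisymm ((Subgroup.closure_le _).2 ?_)
    (alternatingGroup_le_of_isThreeCycle_mem_high_and_triples
      (p := fun x : Fin (3 * d) => (x : ℕ) < d) ?_ ?_)
  · rintro σ (hσ | hσ)
    · exact hσ.1
    · exact (Set.mem_iUnion.1 hσ).elim fun _ hi => hi.1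
  · exact fun τ hτ hhigh => Subgroup.subset_closure (Or.inl
      (mem_altSupported_of_isThreeCycle hτ fun x hx => not_lt.1 (hhigh x hx)))
  · intro a ha
    refine ⟨⟨d + a, by omega⟩, ⟨2 * d + a, by omega⟩, by simp, by simp; omega,
      by simp [Fin.ext_iff]; omega,
      fun τ hτ hsub => Subgroup.subset_closure (Or.inr (Set.mem_iUnion.2 ⟨⟨a, ha⟩,
        mem_altSupported_of_isThreeCycle hτ ((coe_subset.2 hsub).trans (by simp))⟩))⟩
end

section
/- Let G be a group acting by homeomorphisms on a compact Hausdorff space X, and let u : X → Sub(G) be a G-equivariant lower semicontinuous map (with respect to the conjugation action on subgroups) such that u(x) ≠ {1} for all x ∈ X. Then the trivial subgroup {1} does not belong to the closure of the image of u in the Chabauty space Sub(G); in particular u(x) is a confined subgroup for every x ∈ X. -/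
open Classical

/-- The Chabauty topology on the space of subgroups of a discrete group `G`, induced from
the product topology on `{0,1}^G`. -/
noncomputable def chabautyTopology (G : Type*) [Group G] : TopologicalSpace (Subgroup G) :=
  TopologicalSpace.induced (fun H : Subgroup G => fun g : G => decide (g ∈ H))
    (@Pi.topologicalSpace G (fun _ => Bool) (fun _ => ⊥))

/-- The conjugacy class of a subgroup in the space of subgroups. -/
def conjClass {G : Type*} [Group G] (H : Subgroup G) : Set (Subgroup G) :=
  {K | ∃ g : G, K = Subgroup.map (MulAut.conj g).toMonoidHom H}

/-- A subgroup is confined if the closure of its conjugacy class in the Chabauty space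
does not contain the trivial subgroup. -/
def Confined {G : Type*} [Group G] (H : Subgroup G) : Prop :=
  (⊥ : Subgroup G) ∉ @closure (Subgroup G) (chabautyTopology G) (conjClass H)

/-- If `u : X → Sub(G)` is an equivariant lower semicontinuous map, everywhere nontrivial,
for an action of `G` by homeomorphisms on a compact Hausdorff space, then the trivial
subgroup is not in the closure of the image of `u`; in particular each `u x` is confined. -/
theorem bot_not_mem_closure_of_lsc_equivariant {G X : Type*} [Group G] [TopologicalSpace X]
    [CompactSpace X] [T2Space X] [MulAction G X]
    (hcont : ∀ g : G, Continuous fun x : X => g • x)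
    (u : X → Subgroup G)
    (hequiv : ∀ (g : G) (x : X), u (g • x) = Subgroup.map (MulAut.conj g).toMonoidHom (u x))
    (hlsc : ∀ g : G, IsOpen {x : X | g ∈ u x})
    (hnt : ∀ x : X, u x ≠ ⊥) :
    (⊥ : Subgroup G) ∉ @closure (Subgroup G) (chabautyTopology G) (Set.range u) ∧
      ∀ x : X, Confined (u x) := by
  classical
  letI tb : TopologicalSpace Bool := ⊥
  haveI : DiscreteTopology Bool := ⟨rfl⟩
  letI tS : TopologicalSpace (Subgroup G) := chabautyTopology G
  have hf : Continuous (fun H : Subgroup G => fun g : G => decide (g ∈ H)) :=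
    continuous_induced_dom
  have hopen1 : ∀ g : G, IsOpen {H : Subgroup G | g ∉ H} := by
    intro g
    have heq : {H : Subgroup G | g ∉ H} =
        (fun H : Subgroup G => fun a : G => decide (a ∈ H)) ⁻¹'
          ((fun φ : G → Bool => φ g) ⁻¹' {false}) := by
      ext H; simp
    rw [heq]
    exact ((continuous_apply g).comp hf).isOpen_preimage _ (isOpen_discrete _)
  -- cover X by the open sets {x | g ∈ u x}, g ≠ 1
  have hcover : Set.univ ⊆ ⋃ g : {g : G // g ≠ 1}, {x : X | (g : G) ∈ u x} := by
    intro x _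
    obtain ⟨⟨g, hg⟩, hne⟩ := Subgroup.ne_bot_iff_exists_ne_one.mp (hnt x)
    have hg1 : g ≠ 1 := fun h => hne (by ext; exact h)
    exact Set.mem_iUnion.mpr ⟨⟨g, hg1⟩, hg⟩
  obtain ⟨t, ht⟩ := isCompact_univ.elim_finite_subcover
    (fun g : {g : G // g ≠ 1} => {x : X | (g : G) ∈ u x}) (fun g => hlsc g) hcover
  -- the open neighborhood of ⊥ avoiding the range of u
  set V : Set (Subgroup G) := ⋂ g ∈ t, {H : Subgroup G | (g : G) ∉ H} with hV
  have hVopen : IsOpen V := isOpen_biInter_finset fun g _ => hopen1 g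
  have hbotV : (⊥ : Subgroup G) ∈ V := by
    refine Set.mem_biInter fun g _ => ?_
    simpa [Subgroup.mem_bot] using g.2
  have hmain : (⊥ : Subgroup G) ∉ closure (Set.range u) := by
    intro hmem
    obtain ⟨K, hKV, x, hx⟩ := mem_closure_iff.mp hmem V hVopen hbotV
    obtain ⟨g, hg⟩ := Set.mem_iUnion.mp (ht (Set.mem_univ x))
    obtain ⟨hgt, hgx⟩ := Set.mem_iUnion.mp hg
    have : (g : G) ∉ K := Set.mem_iInter₂.mp hKV g hgt
    exact this (hx ▸ hgx)
  refine ⟨hmain, fun x => ?_⟩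
  intro hmem
  exact hmain (closure_mono (by
    rintro K ⟨g, rfl⟩
    exact ⟨g • x, (hequiv g x)⟩) hmem)
end

section
/- Let G be a countable group acting faithfully by homeomorphisms on a Hausdorff space X, let A ≤ G be a subgroup, and let R ≤ G be a nontrivial subgroup normalized by A. Then there exists a nonempty open subset U ⊆ X such that R contains the commutator subgroup [Rist_A(U), Rist_A(U)] of the rigid stabilizer. -/
/-- An element supported in `S` maps `S` into itself. -/
lemma supp_mapsto {G X : Type*} [Group G] [MulAction G X] (a : G) (S : Set X)
    (ha : ∀ x ∉ S, a • x = x) : ∀ x ∈ S, a • x ∈ S := by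
  intro x hx
  by_contra hax
  have h1 : a • (a • x) = a • x := ha _ hax
  have h2 : a • x = x := smul_left_cancel a h1
  rw [h2] at hax
  exact hax hx

/-- Double commutator lemma: if a countable group `G` acts faithfully by homeomorphisms on
a Hausdorff space `X`, `A ≤ G` and `R ≤ G` is a nontrivial subgroup normalized by `A`,
then there is a nonempty open `U ⊆ X` with `[Rist_A(U), Rist_A(U)] ≤ R`. -/
theorem double_commutator_lemma {G X : Type*} [Group G] [Countable G] [TopologicalSpace X]
    [T2Space X] [MulAction G X]
    (hcont : ∀ g : G, Continuous fun x : X => g • x)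
    (hfaith : ∀ g : G, (∀ x : X, g • x = x) → g = 1)
    (A R : Subgroup G) (hR : R ≠ ⊥)
    (hnorm : ∀ a ∈ A, ∀ r ∈ R, a * r * a⁻¹ ∈ R) :
    ∃ U : Set X, IsOpen U ∧ U.Nonempty ∧
      ∀ g h : G, (g ∈ A ∧ ∀ x ∉ U, g • x = x) → (h ∈ A ∧ ∀ x ∉ U, h • x = x) →
        g * h * g⁻¹ * h⁻¹ ∈ R := by
  -- pick a nontrivial element of R
  obtain ⟨⟨r, hrR⟩, hr1⟩ := (Subgroup.ne_bot_iff_exists_ne_one).mp hR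
  have hrne : r ≠ 1 := by
    simpa using hr1
  -- find a point moved by r
  have hx : ∃ x : X, r • x ≠ x := by
    by_contra hc
    push_neg at hc
    exact hrne (hfaith r hc)
  obtain ⟨x, hxr⟩ := hx
  -- separate x and r • x
  obtain ⟨V, W, hVo, hWo, hxV, hrxW, hVW⟩ := t2_separation hxr.symm
  set U : Set X := V ∩ (fun y => r • y) ⁻¹' W with hU
  have hUo : IsOpen U := hVo.inter ((hcont r).isOpen_preimage W hWo)
  have hxU : x ∈ U := ⟨hxV, hrxW⟩
  refine ⟨U, hUo, ⟨x, hxU⟩, ?_⟩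
  rintro g h ⟨hgA, hgU⟩ ⟨hhA, hhU⟩
  -- the translate r • U is disjoint from U
  set W' : Set X := (fun y => r • y) '' U with hW'
  have hdis : ∀ y ∈ U, y ∉ W' := by
    rintro y hy ⟨z, hz, rfl⟩
    exact Set.disjoint_left.mp hVW hy.1 hz.2
  -- k = r g r⁻¹ is supported in W'
  set k : G := r * g * r⁻¹ with hkdef
  have hkU : ∀ y ∉ W', k • y = y := by
    intro y hy
    have h1 : r⁻¹ • y ∉ U := by
      intro hmem
      exact hy ⟨r⁻¹ • y, hmem, by simp⟩
    have h2 : g • (r⁻¹ • y) = r⁻¹ • y := hgU _ h1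
    simp [hkdef, mul_smul, h2]
  -- h and k commute (disjoint supports + faithfulness)
  have hcomm : ∀ y : X, h • (k • y) = k • (h • y) := by
    intro y
    by_cases hyU : y ∈ U
    · have hky : k • y = y := hkU y (hdis y hyU)
      have hhy : h • y ∈ U := supp_mapsto h U hhU y hyU
      rw [hky, hkU _ (hdis _ hhy)]
    · by_cases hyW : y ∈ W'
      · have hhy : h • y = y := hhU y hyU
        have hky : k • y ∈ W' := supp_mapsto k W' hkU y hyW
        have hkyU : k • y ∉ U := fun hc => hdis _ hc hky
        rw [hhy, hhU _ hkyU]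
      · rw [hkU y hyW, hhU y hyU, hkU y hyW]
  have hk' : k⁻¹ * h = h * k⁻¹ := by
    have hhk : h * k = k * h := by
      have h1 : (h * k) * (k * h)⁻¹ = 1 := by
        apply hfaith
        intro y
        calc (h * k * (k * h)⁻¹) • y = (h * k) • ((k * h)⁻¹ • y) := by
              rw [mul_smul (h * k) (k * h)⁻¹ y]
          _ = (k * h) • ((k * h)⁻¹ • y) := by
              rw [mul_smul h k, hcomm, mul_smul k h]
          _ = y := smul_inv_smul _ _
      exact mul_inv_eq_one.mp h1
    calc k⁻¹ * h = k⁻¹ * (h * k) * k⁻¹ := by group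
    _ = k⁻¹ * (k * h) * k⁻¹ := by rw [hhk]
    _ = h * k⁻¹ := by group
  -- c = [g, r] ∈ R
  have hcR : g * k⁻¹ ∈ R := by
    have : g * r * g⁻¹ ∈ R := hnorm g hgA r hrR
    have h2 : (g * r * g⁻¹) * r⁻¹ ∈ R := R.mul_mem this (R.inv_mem hrR)
    have he : (g * r * g⁻¹) * r⁻¹ = g * k⁻¹ := by rw [hkdef]; group
    rwa [he] at h2
  have hfin : (g * k⁻¹) * (h * (g * k⁻¹)⁻¹ * h⁻¹) ∈ R :=
    R.mul_mem hcR (hnorm h hhA _ (R.inv_mem hcR))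
  have key : (g * k⁻¹) * (h * (g * k⁻¹)⁻¹ * h⁻¹) = g * h * g⁻¹ * h⁻¹ := by
    calc (g * k⁻¹) * (h * (g * k⁻¹)⁻¹ * h⁻¹)
        = g * (k⁻¹ * h) * k * g⁻¹ * h⁻¹ := by group
      _ = g * (h * k⁻¹) * k * g⁻¹ * h⁻¹ := by rw [hk']
      _ = g * h * g⁻¹ * h⁻¹ := by group
  rwa [key] at hfin
end

section
/- Let G be a group acting minimally and proximally by homeomorphisms on a compact Hausdorff space X. Then the identity is the only continuous G-equivariant map X → X. -/
/-- For a minimal and proximal action by homeomorphisms of a group `G` on a compact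
Hausdorff space, the identity is the only continuous equivariant self-map. -/
theorem equivariant_selfmap_eq_id_of_minimal_proximal {G X : Type*} [Group G]
    [TopologicalSpace X] [CompactSpace X] [T2Space X] [MulAction G X]
    (hcont : ∀ g : G, Continuous fun x : X => g • x)
    (hmin : ∀ x : X, Dense (MulAction.orbit G x))
    (hprox : ∀ x y : X, ∃ z : X,
      (z, z) ∈ closure {p : X × X | ∃ g : G, p = (g • x, g • y)}) :
    ∀ f : X → X, Continuous f → (∀ (g : G) (x : X), f (g • x) = g • f x) → f = id := by
  intro f hf heq
  -- pick a point and use proximality of x, f x to find a fixed point z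
  cases isEmpty_or_nonempty X with
  | inl h => funext w; exact (h.false w).elim
  | inr h =>
  obtain ⟨x⟩ := h
  obtain ⟨z, hz⟩ := hprox x (f x)
  have hgraph : IsClosed {p : X × X | f p.1 = p.2} :=
    isClosed_eq (hf.comp continuous_fst) continuous_snd
  have hsub : {p : X × X | ∃ g : G, p = (g • x, g • f x)} ⊆ {p : X × X | f p.1 = p.2} := by
    rintro p ⟨g, rfl⟩
    exact heq g x
  have hzfix : f z = z := by
    have := (closure_minimal hsub hgraph) hz
    exact this
  -- the fixed point set is closed and contains the dense orbit of z
  have hfixclosed : IsClosed {w : X | f w = w} := isClosed_eq hf continuous_id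
  have horb : MulAction.orbit G z ⊆ {w : X | f w = w} := by
    rintro _ ⟨g, rfl⟩
    simp only [Set.mem_setOf_eq]
    rw [heq g z, hzfix]
  funext w
  have : w ∈ closure (MulAction.orbit G z) := (hmin z).closure_eq ▸ Set.mem_univ w
  exact (closure_minimal horb hfixclosed) this
end

section
/- Let T be a simplicial tree (a connected graph with no nontrivial cycles), viewed as a metric space with the path metric. Then the asymptotic dimension of T is at most 1. -/
open SimpleGraph Walk

namespace TreeAsdimAux

variable {V : Type*} {G : SimpleGraph V}

/-- Splitting a walk at its `i`-th vertex. -/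
lemma walk_split {a b : V} (p : G.Walk a b) (i : ℕ) (hi : i ≤ p.length) :
    ∃ (q : G.Walk a (p.getVert i)) (q' : G.Walk (p.getVert i) b),
      q.length = i ∧ q'.length + i = p.length := by
  induction p generalizing i with
  | nil =>
    have : i = 0 := by simpa using hi
    subst this
    exact ⟨Walk.nil, Walk.nil, rfl, rfl⟩
  | @cons u x w h p ih =>
    cases i with
    | zero =>
      exact ⟨(Walk.nil).copy rfl ((Walk.cons h p).getVert_zero).symm,
        ((Walk.cons h p).copy ((Walk.cons h p).getVert_zero).symm rfl), by simp, by simp⟩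
    | succ i =>
      obtain ⟨q, q', h1, h2⟩ := ih i (by simpa using hi)
      refine ⟨(Walk.cons h q).copy rfl ?_, q'.copy ?_ rfl, by simp [h1], ?_⟩
      · rw [Walk.getVert_cons_succ]
      · rw [Walk.getVert_cons_succ]
      · simp only [Walk.length_copy, Walk.length_cons]
        omega

/-- Distances to intermediate vertices along a geodesic. -/
lemma dist_getVert {a b : V} (hc : G.Connected) (p : G.Walk a b)
    (hp : p.length = G.dist a b) {i : ℕ} (hi : i ≤ p.length) :
    G.dist a (p.getVert i) = i ∧ G.dist (p.getVert i) b + i = p.length := by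
  obtain ⟨q, q', h1, h2⟩ := walk_split p i hi
  have d1 := dist_le q
  have d2 := dist_le q'
  have tri := hc.dist_triangle (u := a) (v := p.getVert i) (w := b)
  omega

/-- Adjacent vertices are on adjacent levels. -/
lemma level_adj {r u v : V} (hc : G.Connected) (hacyc : G.IsAcyclic) (huv : G.Adj u v) :
    G.dist r v = G.dist r u + 1 ∨ G.dist r u = G.dist r v + 1 := by
  obtain ⟨pu, hpuP, hpuL⟩ := hc.exists_path_of_dist r u
  obtain ⟨pv, hpvP, hpvL⟩ := hc.exists_path_of_dist r v
  have hub : G.dist r v ≤ G.dist r u + 1 := by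
    have := dist_le (pu.concat huv)
    rwa [Walk.length_concat, hpuL] at this
  have hub' : G.dist r u ≤ G.dist r v + 1 := by
    have := dist_le (pv.concat huv.symm)
    rwa [Walk.length_concat, hpvL] at this
  have hne : G.dist r u ≠ G.dist r v := by
    intro heq
    by_cases hv : v ∈ pu.support
    · obtain ⟨i, hgi, hile⟩ := Walk.mem_support_iff_exists_getVert.mp hv
      obtain ⟨e1, e2⟩ := dist_getVert hc pu hpuL hile
      rw [hgi] at e1 e2
      have hvu : 0 < G.dist v u := hc.pos_dist_of_ne huv.ne'
      omega
    · have hcp : (pu.concat huv).IsPath := by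
        rw [← Walk.isPath_reverse_iff, Walk.reverse_concat]
        exact (Walk.isPath_reverse_iff pu |>.mpr hpuP).cons
          (by rwa [Walk.support_reverse, List.mem_reverse])
      have huniq := hacyc.path_unique ⟨pu.concat huv, hcp⟩ ⟨pv, hpvP⟩
      have heqw : pu.concat huv = pv := congrArg Subtype.val huniq
      have hlen : (pu.concat huv).length = pv.length := by rw [heqw]
      rw [Walk.length_concat, hpuL, hpvL] at hlen
      omega
  omega

/-- The `m`-th vertex of a geodesic from `r` does not depend on the endpoint,
for adjacent endpoints. -/
lemma anc_adj {r u v : V} (hc : G.Connected) (hacyc : G.IsAcyclic) (huv : G.Adj u v)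
    (pu : G.Walk r u) (pv : G.Walk r v)
    (hpu : pu.length = G.dist r u) (hpv : pv.length = G.dist r v)
    {m : ℕ} (hmu : m ≤ G.dist r u) (hmv : m ≤ G.dist r v) :
    pu.getVert m = pv.getVert m := by
  have key : ∀ (x y : V) (hxy : G.Adj x y) (px : G.Walk r x) (py : G.Walk r y),
      px.length = G.dist r x → py.length = G.dist r y →
      G.dist r y = G.dist r x + 1 → m ≤ G.dist r x →
      px.getVert m = py.getVert m := by
    intro x y hxy px py hpx hpy hlevel hm
    have hxP := px.isPath_of_length_eq_dist hpx
    have hyP := py.isPath_of_length_eq_dist hpy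
    have hy : y ∉ px.support := by
      intro hmem
      obtain ⟨i, hgi, hile⟩ := Walk.mem_support_iff_exists_getVert.mp hmem
      obtain ⟨e1, e2⟩ := dist_getVert hc px hpx hile
      rw [hgi] at e1
      omega
    have hcp : (px.concat hxy).IsPath := by
      rw [← Walk.isPath_reverse_iff, Walk.reverse_concat]
      exact (Walk.isPath_reverse_iff px |>.mpr hxP).cons
        (by rwa [Walk.support_reverse, List.mem_reverse])
    have huniq := hacyc.path_unique ⟨px.concat hxy, hcp⟩ ⟨py, hyP⟩
    have heq : px.concat hxy = py := congrArg Subtype.val huniq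
    rw [← heq, Walk.concat_eq_append, Walk.getVert_append]
    by_cases hlt : m < px.length
    · rw [if_pos hlt]
    · have hmeq : m = px.length := by omega
      rw [if_neg hlt, hmeq, Nat.sub_self, Walk.getVert_zero, Walk.getVert_length]
  rcases level_adj hc hacyc huv (r := r) with hl | hl
  · exact key u v huv pu pv hpu hpv hl hmu
  · exact (key v u huv.symm pv pu hpv hpu hl hmv).symm

lemma anc_eq_of_close {r : V} (hc : G.Connected) (hacyc : G.IsAcyclic)
    (p : ∀ v, G.Walk r v) (hp : ∀ v, (p v).length = G.dist r v) (m : ℕ) :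
    ∀ (D : ℕ) (u v : V), G.dist u v = D →
      G.dist u v + 2 * m ≤ G.dist r u + G.dist r v →
      (p u).getVert m = (p v).getVert m := by
  intro D
  induction D with
  | zero =>
    intro u v hD _
    have : u = v := hc.dist_eq_zero_iff.mp hD
    rw [this]
  | succ D ih =>
    intro u v hD hclose
    obtain ⟨q, hqP, hqL⟩ := hc.exists_path_of_dist u v
    set w := q.getVert 1 with hw
    have h1 : 1 ≤ q.length := by omega
    obtain ⟨e1, e2⟩ := dist_getVert hc q hqL h1
    rw [← hw] at e1 e2
    have hadj : G.Adj u w := by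
      have := q.adj_getVert_succ (i := 0) (by omega)
      rwa [Walk.getVert_zero] at this
    have hlev := level_adj hc hacyc hadj (r := r)
    have tri1 : G.dist r v ≤ G.dist r u + G.dist u v := hc.dist_triangle
    have tri2 : G.dist r u ≤ G.dist r v + G.dist u v := by
      have h := hc.dist_triangle (u := r) (v := v) (w := u)
      have h2 : G.dist v u = G.dist u v := SimpleGraph.dist_comm
      omega
    have triw : G.dist r v ≤ G.dist r w + G.dist w v := hc.dist_triangle
    have triw2 : G.dist r w ≤ G.dist r v + G.dist w v := by
      have h := hc.dist_triangle (u := r) (v := v) (w := w)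
      have h2 : G.dist v w = G.dist w v := SimpleGraph.dist_comm
      omega
    have hwv : G.dist w v = D := by omega
    have step1 : (p u).getVert m = (p w).getVert m := by
      rcases hlev with hl | hl
      · exact anc_adj hc hacyc hadj (p u) (p w) (hp u) (hp w) (by omega) (by omega)
      · exact anc_adj hc hacyc hadj (p u) (p w) (hp u) (hp w) (by omega) (by omega)
    have step2 : (p w).getVert m = (p v).getVert m := by
      rcases hlev with hl | hl
      · exact ih w v hwv (by omega)
      · exact ih w v hwv (by omega)
    rw [step1, step2]

lemma anc_dist_le {r u v : V} (hc : G.Connected)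
    (pu : G.Walk r u) (pv : G.Walk r v)
    (hpu : pu.length = G.dist r u) (hpv : pv.length = G.dist r v)
    {m : ℕ} (hmu : m ≤ G.dist r u) (hmv : m ≤ G.dist r v)
    (hanc : pu.getVert m = pv.getVert m) :
    G.dist u v + 2 * m ≤ G.dist r u + G.dist r v := by
  obtain ⟨e1, e2⟩ := dist_getVert hc pu hpu (hpu ▸ hmu : m ≤ pu.length)
  obtain ⟨f1, f2⟩ := dist_getVert hc pv hpv (hpv ▸ hmv : m ≤ pv.length)
  rw [← hanc] at f1 f2
  have tri : G.dist u v ≤ G.dist u (pu.getVert m) + G.dist (pu.getVert m) v :=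
    hc.dist_triangle
  have hcomm : G.dist u (pu.getVert m) = G.dist (pu.getVert m) u := SimpleGraph.dist_comm
  omega

end TreeAsdimAux

open TreeAsdimAux in
/-- A simplicial tree (connected acyclic graph) with the graph metric has asymptotic
dimension at most 1: for every `R` there are two `R`-separated uniformly bounded families
of subsets of the vertex set covering it. -/
theorem tree_asdim_le_one {V : Type*} (G : SimpleGraph V)
    (hconn : G.Connected) (hacyc : G.IsAcyclic) (R : ℕ) :
    ∃ D : Fin 2 → Set (Set V),
      (∀ i, ∀ A ∈ D i, ∀ B ∈ D i, A ≠ B → ∀ a ∈ A, ∀ b ∈ B, R < G.dist a b) ∧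
      (∃ C : ℕ, ∀ i, ∀ A ∈ D i, ∀ a ∈ A, ∀ b ∈ A, G.dist a b ≤ C) ∧
      (∀ v : V, ∃ i, ∃ A ∈ D i, v ∈ A) := by
  classical
  obtain ⟨r⟩ := hconn.nonempty
  have hgeo := fun v => hconn.exists_path_of_dist r v
  choose geo _hgeoP hgeoL using hgeo
  set N := R + 1 with hN
  set anc : ℕ → V → V := fun m v => (geo v).getVert m with hanc
  have hdivb : ∀ (v : V) (k : ℕ), G.dist r v / N = k →
      k * N ≤ G.dist r v ∧ G.dist r v < k * N + N := by
    intro v k hk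
    constructor
    · rw [← hk]; exact Nat.div_mul_le_self _ _
    · have h2 : G.dist r v / N < k + 1 := by omega
      have h3 := (Nat.div_lt_iff_lt_mul (by omega : 0 < N)).mp h2
      calc G.dist r v < (k + 1) * N := h3
        _ = k * N + N := by ring
  refine ⟨fun i => {A | ∃ k a, k % 2 = i.val ∧
      A = {v | G.dist r v / N = k ∧ anc (k * N - R) v = a}}, ?_, ?_, ?_⟩
  · -- separation
    rintro i A ⟨k, α, hki, rfl⟩ B ⟨k', α', hki', rfl⟩ hAB a ha b hb
    obtain ⟨hka, hαa⟩ := ha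
    obtain ⟨hkb, hαb⟩ := hb
    obtain ⟨ha1, ha2⟩ := hdivb a k hka
    obtain ⟨hb1, hb2⟩ := hdivb b k' hkb
    by_cases hkk : k = k'
    · subst hkk
      have hαα : α ≠ α' := by
        intro h; subst h; exact hAB rfl
      have hne : anc (k * N - R) a ≠ anc (k * N - R) b := by
        rw [hαa, hαb]; exact hαα
      have hk1 : 1 ≤ k := by
        by_contra h
        have hk0 : k = 0 := by omega
        apply hne
        rw [hk0]
        simp only [Nat.zero_mul, Nat.zero_sub, hanc]
        rw [Walk.getVert_zero, Walk.getVert_zero]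
      have hfar : ¬ (G.dist a b + 2 * (k * N - R) ≤ G.dist r a + G.dist r b) := by
        intro hle
        exact hne (anc_eq_of_close hconn hacyc geo hgeoL (k * N - R)
          (G.dist a b) a b rfl hle)
      have hNle : N ≤ k * N := by
        calc N = 1 * N := (one_mul N).symm
          _ ≤ k * N := Nat.mul_le_mul_right N hk1
      have hsub : (k * N - R) + R = k * N := Nat.sub_add_cancel (by omega)
      omega
    · have hpar : k % 2 = k' % 2 := by omega
      have tri1 : G.dist r a ≤ G.dist r b + G.dist a b := by
        have h := hconn.dist_triangle (u := r) (v := b) (w := a)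
        have h2 : G.dist b a = G.dist a b := SimpleGraph.dist_comm
        omega
      have tri2 : G.dist r b ≤ G.dist r a + G.dist a b :=
        hconn.dist_triangle (u := r) (v := a) (w := b)
      rcases lt_or_gt_of_ne hkk with h | h
      · have hk2 : k + 2 ≤ k' := by omega
        have hmul : (k + 2) * N ≤ k' * N := Nat.mul_le_mul_right N hk2
        have hexp : (k + 2) * N = k * N + N + N := by ring
        omega
      · have hk2 : k' + 2 ≤ k := by omega
        have hmul : (k' + 2) * N ≤ k * N := Nat.mul_le_mul_right N hk2
        have hexp : (k' + 2) * N = k' * N + N + N := by ring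
        omega
  · -- uniform boundedness
    refine ⟨4 * R + 2, ?_⟩
    rintro i A ⟨k, α, hki, rfl⟩ a ha b hb
    obtain ⟨hka, hαa⟩ := ha
    obtain ⟨hkb, hαb⟩ := hb
    obtain ⟨ha1, ha2⟩ := hdivb a k hka
    obtain ⟨hb1, hb2⟩ := hdivb b k hkb
    by_cases hk0 : k = 0
    · have tri : G.dist a b ≤ G.dist r a + G.dist r b := by
        have h := hconn.dist_triangle (u := a) (v := r) (w := b)
        have h2 : G.dist a r = G.dist r a := SimpleGraph.dist_comm
        omega
      subst hk0
      simp only [Nat.zero_mul] at ha2 hb2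
      omega
    · have hk1 : 1 ≤ k := by omega
      have hNle : N ≤ k * N := by
        calc N = 1 * N := (one_mul N).symm
          _ ≤ k * N := Nat.mul_le_mul_right N hk1
      have hsub : (k * N - R) + R = k * N := Nat.sub_add_cancel (by omega)
      have hm : k * N - R ≤ G.dist r a := by omega
      have hm' : k * N - R ≤ G.dist r b := by omega
      have hancab : (geo a).getVert (k * N - R) = (geo b).getVert (k * N - R) := by
        have h : anc (k * N - R) a = anc (k * N - R) b := by rw [hαa, hαb]
        exact h
      have hkey := anc_dist_le hconn (geo a) (geo b) (hgeoL a) (hgeoL b) hm hm' hancab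
      omega
  · -- covering
    intro v
    exact ⟨⟨(G.dist r v / N) % 2, by omega⟩,
      {u | G.dist r u / N = G.dist r v / N ∧
        anc ((G.dist r v / N) * N - R) u = anc ((G.dist r v / N) * N - R) v},
      ⟨G.dist r v / N, anc ((G.dist r v / N) * N - R) v, rfl, rfl⟩, rfl, rfl⟩
end
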